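/- arXiv:2303.15064 — 2 statements merged into one kernel-verified Lean document; each statement's English description precedes it below -/
import Mathlib

section
/- For the Gaussian AR(1) kernel 𝒬 with |a| < 1 and σ > 0 as above, and for every differentiable f : ℝ → ℝ with f and f' bounded, one has for all n ≥ 0 and x ∈ ℝ: |𝒬ⁿf(x) − ∫ f dμ| ≤ ‖f'‖_∞ (σ(1 − a)^{-1} + |x|) aⁿ, where μ = N(0, σ²/(1 − a²)) and a ∈ (0,1). -/
/-!
Started at `x`, the chain is Gaussian: composing the kernel with itself is a convolution of
Gaussians, so `𝒬ⁿ(x, ·) = N(aⁿ x, vₙ)` with `vₙ = σ² ∑_{k<n} a^{2k}`. Coupling two Gaussians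
through one standard normal `Z` shows that a `K`-Lipschitz `f` satisfies
`|∫ f dN(m₁, v₁) - ∫ f dN(m₂, v₂)| ≤ K (|m₁ - m₂| + |√v₁ - √v₂|)`, since `E|Z| ≤ 1`.
Against the stationary law `N(0, σₐ²)`, `σₐ² = σ² / (1 - a²)`, the means differ by `aⁿ |x|` and,
as `vₙ = σₐ² - (σₐ aⁿ)²`, the standard deviations by at most `σₐ aⁿ ≤ σ (1 - a)⁻¹ aⁿ`.
-/

open Real MeasureTheory ProbabilityTheory
open scoped NNReal

lemma abs_sqrt_sq_sub_sq_sub_le {b c : ℝ} (hb : 0 ≤ b) (hbc : b ≤ c) :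
    |√(c ^ 2 - b ^ 2) - c| ≤ b := by
  have hle : √(c ^ 2 - b ^ 2) ≤ c := (sqrt_le_left (hb.trans hbc)).2 (by nlinarith)
  have hge : c - b ≤ √(c ^ 2 - b ^ 2) := le_sqrt_of_sq_le (by nlinarith)
  rw [abs_of_nonpos (sub_nonpos.2 hle)]
  linarith

lemma div_sqrt_one_sub_sq_le {a σ : ℝ} (hσ : 0 ≤ σ) (ha0 : 0 ≤ a) (ha1 : a < 1) :
    σ / √(1 - a ^ 2) ≤ σ * (1 - a)⁻¹ := by
  have hle : 1 - a ≤ √(1 - a ^ 2) := le_sqrt_of_sq_le (by nlinarith)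
  rw [div_eq_mul_inv]
  gcongr

namespace ProbabilityTheory

lemma integral_mul_gaussianPDFReal (g : ℝ → ℝ) (m : ℝ) {v : ℝ≥0} (hv : v ≠ 0) :
    ∫ y, g y * gaussianPDFReal m v y = ∫ y, g y ∂gaussianReal m v := by
  simp_rw [integral_gaussianReal_eq_integral_smul hv, smul_eq_mul, mul_comm]

lemma gaussianReal_zero_one_map_affine (m : ℝ) (v : ℝ≥0) :
    (gaussianReal 0 1).map (fun z ↦ m + √v * z) = gaussianReal m v := by
  have hcomp : (fun z ↦ m + √v * z) = (m + ·) ∘ (√v * ·) := rfl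
  rw [hcomp, ← Measure.map_map (by fun_prop) (by fun_prop), gaussianReal_map_const_mul,
    gaussianReal_map_const_add]
  congr 1
  · ring
  · ext; simp

lemma integral_abs_gaussianReal_zero_one_le_one : ∫ z, |z| ∂gaussianReal 0 1 ≤ 1 := by
  have hsq : ∫ z, z ^ 2 ∂gaussianReal 0 1 = 1 := by
    have h := variance_of_integral_eq_zero (X := id) (μ := gaussianReal 0 1) aemeasurable_id
      (by simp [integral_id_gaussianReal])
    simpa [variance_id_gaussianReal] using h.symm
  have hint : Integrable (fun z : ℝ ↦ z ^ 2) (gaussianReal 0 1) := by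
    simpa using (memLp_id_gaussianReal (μ := 0) (v := 1) 2).integrable_sq
  calc ∫ z, |z| ∂gaussianReal 0 1 ≤ ∫ z, (1 + z ^ 2) / 2 ∂gaussianReal 0 1 :=
        integral_mono_of_nonneg (ae_of_all _ fun z ↦ abs_nonneg z)
          (((integrable_const 1).add hint).div_const 2) (ae_of_all _ fun z ↦ by
            nlinarith [sq_abs z, sq_nonneg (|z| - 1)])
    _ = 1 := by
        rw [integral_div, integral_add (integrable_const 1) hint, hsq]
        norm_num

lemma _root_.LipschitzWith.integrable_gaussianReal {f : ℝ → ℝ} {K : ℝ≥0}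
    (hf : LipschitzWith K f) (m : ℝ) (v : ℝ≥0) : Integrable f (gaussianReal m v) := by
  have hid : Integrable (fun x : ℝ ↦ x) (gaussianReal m v) :=
    (memLp_id_gaussianReal 1).integrable le_rfl
  refine ((integrable_const |f 0|).add (hid.abs.const_mul K)).mono'
    hf.continuous.aestronglyMeasurable (ae_of_all _ fun x ↦ ?_)
  have := hf.dist_le_mul x 0
  rw [Real.dist_eq, Real.dist_eq, sub_zero] at this
  rw [Real.norm_eq_abs, Pi.add_apply]
  linarith [abs_sub_abs_le_abs_sub (f x) (f 0)]

lemma _root_.LipschitzWith.abs_integral_gaussianReal_sub_le {f : ℝ → ℝ} {K : ℝ≥0}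
    (hf : LipschitzWith K f) (m₁ m₂ : ℝ) (v₁ v₂ : ℝ≥0) :
    |∫ x, f x ∂gaussianReal m₁ v₁ - ∫ x, f x ∂gaussianReal m₂ v₂|
      ≤ K * (|m₁ - m₂| + |√v₁ - √v₂|) := by
  have hcoupling : ∀ m (v : ℝ≥0),
      ∫ x, f x ∂gaussianReal m v = ∫ z, f (m + √v * z) ∂gaussianReal 0 1 := fun m v ↦ by
    rw [← gaussianReal_zero_one_map_affine,
      integral_map (by fun_prop) hf.continuous.aestronglyMeasurable]
  have hint : ∀ m (v : ℝ≥0), Integrable (fun z ↦ f (m + √v * z)) (gaussianReal 0 1) :=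
    fun m v ↦ by
      have := hf.integrable_gaussianReal m v
      rwa [← gaussianReal_zero_one_map_affine,
        integrable_map_measure hf.continuous.aestronglyMeasurable (by fun_prop)] at this
  have habs : Integrable (fun z : ℝ ↦ |z|) (gaussianReal 0 1) :=
    ((memLp_id_gaussianReal 1).integrable le_rfl).abs
  rw [hcoupling, hcoupling, ← integral_sub (hint _ _) (hint _ _)]
  calc |∫ z, f (m₁ + √v₁ * z) - f (m₂ + √v₂ * z) ∂gaussianReal 0 1|
      ≤ ∫ z, K * (|m₁ - m₂| + |√v₁ - √v₂| * |z|) ∂gaussianReal 0 1 := by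
        refine abs_integral_le_integral_abs.trans (integral_mono ((hint _ _).sub (hint _ _)).abs
          (((integrable_const _).add (habs.const_mul _)).const_mul _) fun z ↦ ?_)
        refine (hf.dist_le_mul _ _).trans (mul_le_mul_of_nonneg_left ?_ K.2)
        rw [Real.dist_eq, ← abs_mul, show m₁ + √v₁ * z - (m₂ + √v₂ * z)
          = (m₁ - m₂) + (√v₁ - √v₂) * z by ring]
        exact abs_add_le _ _
    _ = K * (|m₁ - m₂| + |√v₁ - √v₂| * ∫ z, |z| ∂gaussianReal 0 1) := by
        rw [integral_const_mul, integral_add (integrable_const _) (habs.const_mul _),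
          integral_const_mul]
        simp
    _ ≤ K * (|m₁ - m₂| + |√v₁ - √v₂|) := by
        gcongr
        exact mul_le_of_le_one_right (abs_nonneg _) integral_abs_gaussianReal_zero_one_le_one

lemma integral_integral_gaussianReal_const_mul {f : ℝ → ℝ} (hf : Measurable f) (c m : ℝ)
    (v w : ℝ≥0) (hint : Integrable f (gaussianReal (c * m) (.mk (c ^ 2) (sq_nonneg c) * v + w))) :
    ∫ y, ∫ z, f z ∂gaussianReal (c * y) w ∂gaussianReal m v
      = ∫ z, f z ∂gaussianReal (c * m) (.mk (c ^ 2) (sq_nonneg c) * v + w) := by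
  have hconv : gaussianReal (c * m) (.mk (c ^ 2) (sq_nonneg c) * v + w)
      = (gaussianReal m v).map (c * ·) ∗ gaussianReal 0 w := by
    rw [gaussianReal_map_const_mul, gaussianReal_conv_gaussianReal, add_zero]
  have hinner : ∀ y, ∫ z, f z ∂gaussianReal (c * y) w = ∫ u, f (c * y + u) ∂gaussianReal 0 w :=
    fun y ↦ by
      rw [← integral_map (by fun_prop) hf.aestronglyMeasurable (μ := gaussianReal 0 w),
        gaussianReal_map_const_add, zero_add]
  rw [hconv] at hint ⊢
  rw [integral_conv hint, integral_map (by fun_prop)]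
  · simp_rw [hinner]
  · exact (hf.comp measurable_add).stronglyMeasurable.integral_prod_right'.aestronglyMeasurable

def ar1Variance (a : ℝ) (v : ℝ≥0) (n : ℕ) : ℝ≥0 :=
  ∑ k ∈ Finset.range n, .mk ((a ^ k) ^ 2) (sq_nonneg _) * v

lemma ar1Variance_succ (a : ℝ) (v : ℝ≥0) (n : ℕ) :
    ar1Variance a v (n + 1) = .mk ((a ^ n) ^ 2) (sq_nonneg _) * v + ar1Variance a v n := by
  rw [ar1Variance, Finset.sum_range_succ, add_comm]
  rfl

lemma ar1Variance_mul_one_sub_sq (a : ℝ) (v : ℝ≥0) (n : ℕ) :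
    ar1Variance a v n * (1 - a ^ 2) = v * (1 - (a ^ n) ^ 2) := by
  induction n with
  | zero => simp [ar1Variance]
  | succ n ih =>
    rw [ar1Variance_succ, NNReal.coe_add, add_mul, ih, NNReal.coe_mul, NNReal.coe_mk]
    ring

theorem iterate_apply_eq_integral_gaussianReal {a : ℝ} {v : ℝ≥0} {Q : (ℝ → ℝ) → ℝ → ℝ}
    (hQ : ∀ g x, Q g x = ∫ y, g y ∂gaussianReal (a * x) v) {f : ℝ → ℝ} (hf : Measurable f)
    (hint : ∀ m w, Integrable f (gaussianReal m w)) (n : ℕ) (x : ℝ) :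
    Q^[n] f x = ∫ y, f y ∂gaussianReal (a ^ n * x) (ar1Variance a v n) := by
  induction n generalizing x with
  | zero => simp [ar1Variance, gaussianReal_zero_var, integral_dirac]
  | succ n ih =>
    rw [Function.iterate_succ_apply', hQ]
    simp_rw [ih]
    rw [integral_integral_gaussianReal_const_mul hf _ _ _ _ (hint _ _), ← ar1Variance_succ,
      pow_succ, mul_assoc]

lemma abs_sqrt_ar1Variance_sub_le {a σ : ℝ} (hσ : 0 ≤ σ) (ha0 : 0 ≤ a) (ha1 : a < 1) (n : ℕ) :
    |√(ar1Variance a (.mk (σ ^ 2) (sq_nonneg σ)) n) - σ / √(1 - a ^ 2)|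
      ≤ σ * (1 - a)⁻¹ * a ^ n := by
  set s := σ / √(1 - a ^ 2)
  have hs : 0 ≤ s := by positivity
  have hs_sq : s ^ 2 * (1 - a ^ 2) = σ ^ 2 := by
    rw [div_pow, sq_sqrt (by nlinarith), div_mul_cancel₀ _ (by nlinarith)]
  have hvar : (ar1Variance a (.mk (σ ^ 2) (sq_nonneg σ)) n : ℝ) = s ^ 2 - (s * a ^ n) ^ 2 := by
    refine mul_right_cancel₀ (show 1 - a ^ 2 ≠ 0 by nlinarith) ?_
    rw [ar1Variance_mul_one_sub_sq, NNReal.coe_mk, ← hs_sq]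
    ring
  rw [hvar]
  exact (abs_sqrt_sq_sub_sq_sub_le (mul_nonneg hs (pow_nonneg ha0 n))
    (mul_le_of_le_one_right hs (pow_le_one₀ ha0 ha1.le))).trans
    (mul_le_mul_of_nonneg_right (div_sqrt_one_sub_sq_le hσ ha0 ha1) (pow_nonneg ha0 n))

end ProbabilityTheory

theorem gaussian_AR1_geom_erg_general (a σ : ℝ) (ha : a ∈ Set.Ioo (0 : ℝ) 1) (hσ : 0 < σ)
    (q : ℝ → ℝ → ℝ) (muD : ℝ → ℝ) (σa : ℝ)
    (hσa : σa = σ / Real.sqrt (1 - a ^ 2))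
    (hq : ∀ x y, q x y = (Real.sqrt (2 * π * σ ^ 2))⁻¹ * Real.exp (-(y - a * x) ^ 2 / (2 * σ ^ 2)))
    (hmu : ∀ x, muD x = (Real.sqrt (2 * π * σa ^ 2))⁻¹ * Real.exp (-x ^ 2 / (2 * σa ^ 2)))
    (Q : (ℝ → ℝ) → (ℝ → ℝ)) (hQ : ∀ g x, Q g x = ∫ y, g y * q x y)
    (f f' : ℝ → ℝ) (hderiv : ∀ x, HasDerivAt f (f' x) x)
    (C' : ℝ) (hf'bd : ∀ x, |f' x| ≤ C') :
    ∀ (n : ℕ) (x : ℝ),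
      |(Q^[n] f) x - ∫ y, f y * muD y| ≤ C' * (σ * (1 - a)⁻¹ + |x|) * a ^ n := by
  intro n x
  obtain ⟨ha0, ha1⟩ := ha
  have hC' : 0 ≤ C' := (abs_nonneg _).trans (hf'bd 0)
  have hlip : LipschitzWith (.mk C' hC') f :=
    lipschitzWith_of_nnnorm_deriv_le (fun y ↦ (hderiv y).differentiableAt) fun y ↦ by
      rw [(hderiv y).deriv, ← NNReal.coe_le_coe, coe_nnnorm]
      exact hf'bd y
  have hσa0 : 0 < σa := hσa ▸ div_pos hσ (sqrt_pos.2 (by nlinarith))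
  have hQ' : ∀ g y, Q g y = ∫ z, g z ∂gaussianReal (a * y) (.mk (σ ^ 2) (sq_nonneg σ)) :=
    fun g y ↦ by
      rw [hQ, ← integral_mul_gaussianPDFReal g _ (by simp [← NNReal.coe_eq_zero, hσ.ne'])]
      simp_rw [hq]
      rfl
  have hμ : ∫ y, f y * muD y = ∫ y, f y ∂gaussianReal 0 (.mk (σa ^ 2) (sq_nonneg σa)) := by
    rw [← integral_mul_gaussianPDFReal _ _ (by simp [← NNReal.coe_eq_zero, hσa0.ne'])]
    simp_rw [hmu, gaussianPDFReal_def, sub_zero]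
    rfl
  rw [iterate_apply_eq_integral_gaussianReal hQ' hlip.continuous.measurable
    hlip.integrable_gaussianReal, hμ]
  refine (hlip.abs_integral_gaussianReal_sub_le _ _ _ _).trans ?_
  have hsd := abs_sqrt_ar1Variance_sub_le hσ.le ha0.le ha1 n
  rw [← hσa] at hsd
  rw [NNReal.coe_mk, NNReal.coe_mk, sqrt_sq hσa0.le, sub_zero, abs_mul,
    abs_of_nonneg (pow_nonneg ha0.le n)]
  calc C' * (a ^ n * |x| + |√(ar1Variance a (.mk (σ ^ 2) (sq_nonneg σ)) n) - σa|)
      ≤ C' * (a ^ n * |x| + σ * (1 - a)⁻¹ * a ^ n) := by gcongr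
    _ = C' * (σ * (1 - a)⁻¹ + |x|) * a ^ n := by ring

/-- Geometric ergodicity bound for the Gaussian AR(1) kernel: for `f` differentiable with
`f` and `f'` bounded, `|𝒬ⁿ f(x) − ⟨μ, f⟩| ≤ ‖f'‖_∞ (σ(1−a)⁻¹ + |x|) aⁿ`. -/
theorem gaussian_AR1_geom_erg (a σ : ℝ) (ha : a ∈ Set.Ioo (0 : ℝ) 1) (hσ : 0 < σ)
    (q : ℝ → ℝ → ℝ) (muD : ℝ → ℝ) (σa : ℝ)
    (hσa : σa = σ / Real.sqrt (1 - a ^ 2))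
    (hq : ∀ x y, q x y = (Real.sqrt (2 * π * σ ^ 2))⁻¹ * Real.exp (-(y - a * x) ^ 2 / (2 * σ ^ 2)))
    (hmu : ∀ x, muD x = (Real.sqrt (2 * π * σa ^ 2))⁻¹ * Real.exp (-x ^ 2 / (2 * σa ^ 2)))
    (Q : (ℝ → ℝ) → (ℝ → ℝ)) (hQ : ∀ g x, Q g x = ∫ y, g y * q x y)
    (f f' : ℝ → ℝ) (hderiv : ∀ x, HasDerivAt f (f' x) x)
    (Cf C' : ℝ) (hfbd : ∀ x, |f x| ≤ Cf) (hf'bd : ∀ x, |f' x| ≤ C') :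
    ∀ (n : ℕ) (x : ℝ),
      |(Q^[n] f) x - ∫ y, f y * muD y| ≤ C' * (σ * (1 - a)⁻¹ + |x|) * a ^ n :=
  gaussian_AR1_geom_erg_general a σ ha hσ q muD σa hσa hq hmu Q hQ f f' hderiv C' hf'bd
end

section
/- Let (X_u)_{u∈T} be a bifurcating Markov chain on S with kernel 𝒫 started at x, and 𝒬 = (P₀+P₁)/2. For every bounded measurable f and n ≥ 0: E_x[(∑_{u∈G_n} f(X_u))²] = 2ⁿ 𝒬ⁿ(f²)(x) + ∑_{k=0}^{n−1} 2^{n+k} 𝒬^{n−k−1}(𝒫(𝒬^k f ⊗ 𝒬^k f))(x), where (g ⊗ h)(y,z) = g(y)h(z) and 𝒫(F)(x) = ∫ F(y,z) 𝒫(x, dy, dz) for F on S². -/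
open MeasureTheory ProbabilityTheory

/-- Expected sum of `f` over generation `n` of a bifurcating Markov chain with
reproduction kernel `κ`, started at `x` (branching Markov property recursion). -/
noncomputable def genSum {S : Type*} [MeasurableSpace S] (κ : Kernel S (S × S))
    (f : S → ℝ) : ℕ → S → ℝ
  | 0 => f
  | n + 1 => fun x => ∫ p : S × S, (genSum κ f n p.1 + genSum κ f n p.2) ∂(κ x)

/-- Expected squared sum `E_x[(∑_{u ∈ 𝔾_n} f(X_u))²]`, defined by the recursion coming from
the branching Markov property (daughters' subtrees are conditionally independent). -/
noncomputable def genSq {S : Type*} [MeasurableSpace S] (κ : Kernel S (S × S))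
    (f : S → ℝ) : ℕ → S → ℝ
  | 0 => fun x => f x ^ 2
  | n + 1 => fun x => ∫ p : S × S,
      (genSq κ f n p.1 + genSq κ f n p.2 + 2 * genSum κ f n p.1 * genSum κ f n p.2) ∂(κ x)

/-- The mean transition operator `𝒬 g = (P₀ g + P₁ g)/2`. -/
noncomputable def meanOp {S : Type*} [MeasurableSpace S] (κ : Kernel S (S × S))
    (g : S → ℝ) : S → ℝ :=
  fun x => ∫ p : S × S, (g p.1 + g p.2) / 2 ∂(κ x)

/-- The operator `𝒫 F (x) = ∫ F(y,z) 𝒫(x, dy, dz)` applied to a tensor product. -/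
noncomputable def prodOp {S : Type*} [MeasurableSpace S] (κ : Kernel S (S × S))
    (g h : S → ℝ) : S → ℝ :=
  fun x => ∫ p : S × S, g p.1 * h p.2 ∂(κ x)

/-!
Because `genSum n = 2ⁿ 𝒬ⁿ f`, the cross term in the defining recursion of `genSq` is
`2^(2n+1) 𝒫(𝒬ⁿ f ⊗ 𝒬ⁿ f)`, so `genSq (n+1) = 2 𝒬 (genSq n) + 2^(2n+1) 𝒫(𝒬ⁿ f ⊗ 𝒬ⁿ f)`.
On bounded measurable functions, where the integrals are additive, `𝒬` is a linear operator,
and the discrete variation-of-constants formula unrolls this affine recursion.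
-/

theorem Module.End.variation_of_constants {R M : Type*} [Semiring R] [AddCommMonoid M]
    [Module R M]
    (L : Module.End R M) (u v : ℕ → M) (hu : ∀ n, u (n + 1) = L (u n) + v n) (n : ℕ) :
    u n = (L ^ n) (u 0) + ∑ k ∈ Finset.range n, (L ^ (n - k - 1)) (v k) := by
  induction n with
  | zero => simp
  | succ n ih =>
    have hshift : ∀ k ∈ Finset.range n,
        L ((L ^ (n - k - 1)) (v k)) = (L ^ (n + 1 - k - 1)) (v k) := by
      intro k hk
      have hk : k < n := Finset.mem_range.mp hk
      rw [← Module.End.mul_apply, ← pow_succ', show n - k - 1 + 1 = n + 1 - k - 1 by omega]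
    rw [hu, ih, map_add, map_sum, Finset.sum_congr rfl hshift, Finset.sum_range_succ,
      ← Module.End.mul_apply, ← pow_succ', add_assoc]
    simp

def boundedMeasurable (S : Type*) [MeasurableSpace S] : Subalgebra ℝ (S → ℝ) where
  carrier := {g | Measurable g ∧ ∃ C, ∀ x, |g x| ≤ C}
  mul_mem' := by
    rintro g h ⟨hg, Cg, hCg⟩ ⟨hh, Ch, hCh⟩
    refine ⟨hg.mul hh, Cg * Ch, fun x => ?_⟩
    rw [Pi.mul_apply, abs_mul]
    exact mul_le_mul (hCg x) (hCh x) (abs_nonneg _) ((abs_nonneg _).trans (hCg x))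
  add_mem' := by
    rintro g h ⟨hg, Cg, hCg⟩ ⟨hh, Ch, hCh⟩
    exact ⟨hg.add hh, Cg + Ch, fun x => (abs_add_le _ _).trans (add_le_add (hCg x) (hCh x))⟩
  algebraMap_mem' c := ⟨measurable_const, |c|, fun _ => le_rfl⟩

namespace boundedMeasurable

variable {S T : Type*} [MeasurableSpace S] [MeasurableSpace T]

theorem comp_mem {g : S → ℝ} (hg : g ∈ boundedMeasurable S) {φ : T → S} (hφ : Measurable φ) :
    g ∘ φ ∈ boundedMeasurable T :=
  ⟨hg.1.comp hφ, hg.2.imp fun _ hC x => hC (φ x)⟩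

theorem integrable {g : S → ℝ} (hg : g ∈ boundedMeasurable S) (μ : Measure S)
    [IsFiniteMeasure μ] : Integrable g μ := by
  obtain ⟨hm, C, hC⟩ := hg
  exact Integrable.of_bound hm.aestronglyMeasurable C (ae_of_all _ hC)

theorem integral_mem {F : T → ℝ} (hF : F ∈ boundedMeasurable T) (κ : Kernel S T)
    [IsFiniteKernel κ] : (fun x => ∫ y, F y ∂κ x) ∈ boundedMeasurable S := by
  obtain ⟨hm, C, hC⟩ := hF
  refine ⟨hm.stronglyMeasurable.integral_kernel.measurable, |C| * κ.bound.toReal, fun x => ?_⟩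
  calc |∫ y, F y ∂κ x| ≤ |C| * (κ x).real Set.univ :=
        norm_integral_le_of_norm_le_const (ae_of_all _ fun y => (hC y).trans (le_abs_self C) :
          ∀ᵐ y ∂κ x, ‖F y‖ ≤ |C|)
    _ ≤ |C| * κ.bound.toReal := by
        gcongr
        exact ENNReal.toReal_mono κ.bound_ne_top (κ.measure_le_bound x _)

end boundedMeasurable

section

variable {S : Type*} [MeasurableSpace S] {κ : Kernel S (S × S)}

theorem genSum_eq_two_pow_mul_iterate (f : S → ℝ) (n : ℕ) :
    genSum κ f n = fun x => 2 ^ n * (meanOp κ)^[n] f x := by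
  induction n with
  | zero => funext x; simp [genSum]
  | succ n ih =>
    funext x
    have hpair : ∀ p : S × S, genSum κ f n p.1 + genSum κ f n p.2
        = 2 ^ (n + 1) * (((meanOp κ)^[n] f p.1 + (meanOp κ)^[n] f p.2) / 2) := by
      intro p; rw [ih]; ring
    simp only [genSum]
    rw [integral_congr_ae (ae_of_all _ hpair), integral_const_mul, Function.iterate_succ_apply']
    rfl

theorem fst_add_snd_div_two_mem {g : S → ℝ} (hg : g ∈ boundedMeasurable S) :
    (fun p : S × S => (g p.1 + g p.2) / 2) ∈ boundedMeasurable (S × S) := by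
  convert Subalgebra.smul_mem _ (add_mem (boundedMeasurable.comp_mem hg measurable_fst)
    (boundedMeasurable.comp_mem hg measurable_snd)) (2⁻¹ : ℝ) using 1
  funext p
  simp [div_eq_inv_mul]

variable [IsFiniteKernel κ]

theorem meanOp_mem {g : S → ℝ} (hg : g ∈ boundedMeasurable S) :
    meanOp κ g ∈ boundedMeasurable S :=
  boundedMeasurable.integral_mem (fst_add_snd_div_two_mem hg) κ

theorem fst_mul_snd_mem {g h : S → ℝ} (hg : g ∈ boundedMeasurable S)
    (hh : h ∈ boundedMeasurable S) :
    (fun p : S × S => g p.1 * h p.2) ∈ boundedMeasurable (S × S) :=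
  mul_mem (boundedMeasurable.comp_mem hg measurable_fst)
    (boundedMeasurable.comp_mem hh measurable_snd)

theorem prodOp_mem {g h : S → ℝ} (hg : g ∈ boundedMeasurable S) (hh : h ∈ boundedMeasurable S) :
    prodOp κ g h ∈ boundedMeasurable S :=
  boundedMeasurable.integral_mem (fst_mul_snd_mem hg hh) κ

variable (κ) in
noncomputable def meanOpₗ : Module.End ℝ (boundedMeasurable S) where
  toFun g := ⟨meanOp κ g, meanOp_mem g.2⟩
  map_add' g h := Subtype.ext <| funext fun x => by
    have hg := boundedMeasurable.integrable (fst_add_snd_div_two_mem g.2) (κ x)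
    have hh := boundedMeasurable.integrable (fst_add_snd_div_two_mem h.2) (κ x)
    show meanOp κ (g + h : S → ℝ) x = meanOp κ g x + meanOp κ h x
    simp only [meanOp, Pi.add_apply, ← integral_add hg hh]
    congr 1 with p
    ring
  map_smul' c g := Subtype.ext <| funext fun x => by
    show meanOp κ (c • g : S → ℝ) x = c * meanOp κ g x
    simp only [meanOp, Pi.smul_apply, smul_eq_mul, ← integral_const_mul]
    congr 1 with p
    ring

theorem coe_meanOpₗ_pow_apply (g : boundedMeasurable S) (m : ℕ) :
    ((meanOpₗ κ ^ m) g : S → ℝ) = (meanOp κ)^[m] g := by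
  rw [Module.End.pow_apply]
  exact (Function.Semiconj.iterate_right (f := Subtype.val) (fun _ => rfl) m) g

theorem iterate_meanOp_mem {g : S → ℝ} (hg : g ∈ boundedMeasurable S) (m : ℕ) :
    (meanOp κ)^[m] g ∈ boundedMeasurable S :=
  coe_meanOpₗ_pow_apply (κ := κ) ⟨g, hg⟩ m ▸ ((meanOpₗ κ ^ m) ⟨g, hg⟩).2

theorem genSq_succ {f : S → ℝ} (hf : f ∈ boundedMeasurable S) {n : ℕ}
    (hsq : genSq κ f n ∈ boundedMeasurable S) :
    genSq κ f (n + 1) = (2 : ℝ) • meanOp κ (genSq κ f n)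
      + (2 ^ (2 * n + 1) : ℝ) • prodOp κ ((meanOp κ)^[n] f) ((meanOp κ)^[n] f) := by
  funext x
  set g := (meanOp κ)^[n] f
  have hg : g ∈ boundedMeasurable S := iterate_meanOp_mem hf n
  have hsplit : ∀ p : S × S,
      genSq κ f n p.1 + genSq κ f n p.2 + 2 * genSum κ f n p.1 * genSum κ f n p.2
        = 2 * ((genSq κ f n p.1 + genSq κ f n p.2) / 2) + 2 ^ (2 * n + 1) * (g p.1 * g p.2) := by
    intro p
    rw [genSum_eq_two_pow_mul_iterate]
    ring
  simp only [genSq, hsplit]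
  rw [integral_add
    ((boundedMeasurable.integrable (fst_add_snd_div_two_mem hsq) (κ x)).const_mul 2)
    ((boundedMeasurable.integrable (fst_mul_snd_mem hg hg) (κ x)).const_mul _),
    integral_const_mul, integral_const_mul]
  rfl

theorem genSq_mem {f : S → ℝ} (hf : f ∈ boundedMeasurable S) (n : ℕ) :
    genSq κ f n ∈ boundedMeasurable S := by
  induction n with
  | zero =>
    convert mul_mem hf hf using 1
    funext x
    exact sq (f x)
  | succ n ih =>
    rw [genSq_succ hf ih]
    exact add_mem (Subalgebra.smul_mem _ (meanOp_mem ih) _)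
      (Subalgebra.smul_mem _ (prodOp_mem (iterate_meanOp_mem hf n) (iterate_meanOp_mem hf n)) _)

end

/-- Second moment formula for bifurcating Markov chains:
`E_x[(∑_{u ∈ 𝔾_n} f(X_u))²] = 2ⁿ 𝒬ⁿ(f²)(x)
  + ∑_{k=0}^{n−1} 2^{n+k} 𝒬^{n−k−1}(𝒫(𝒬^k f ⊗ 𝒬^k f))(x)`. -/
theorem bmc_second_moment {S : Type*} [MeasurableSpace S]
    (κ : Kernel S (S × S)) [IsMarkovKernel κ]
    (f : S → ℝ) (hf : Measurable f) (C : ℝ) (hfbd : ∀ x, |f x| ≤ C) :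
    ∀ (n : ℕ) (x : S),
      genSq κ f n x
        = 2 ^ n * ((meanOp κ)^[n] (fun y => f y ^ 2)) x
          + ∑ k ∈ Finset.range n, 2 ^ (n + k) *
              ((meanOp κ)^[n - k - 1]
                (prodOp κ ((meanOp κ)^[k] f) ((meanOp κ)^[k] f))) x := by
  intro n x
  have hf_mem : f ∈ boundedMeasurable S := ⟨hf, C, hfbd⟩
  have hQf k : (meanOp κ)^[k] f ∈ boundedMeasurable S := iterate_meanOp_mem hf_mem k
  have hunrolled := Module.End.variation_of_constants ((2 : ℝ) • meanOpₗ κ)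
    (fun n => ⟨genSq κ f n, genSq_mem hf_mem n⟩)
    (fun k => (2 ^ (2 * k + 1) : ℝ) •
      ⟨prodOp κ ((meanOp κ)^[k] f) ((meanOp κ)^[k] f), prodOp_mem (hQf k) (hQf k)⟩)
    (fun n => Subtype.ext (genSq_succ hf_mem (genSq_mem hf_mem n))) n
  have hx := congrArg (fun g : boundedMeasurable S => (g : S → ℝ) x) hunrolled
  simp only [smul_pow, LinearMap.smul_apply, map_smul, Subalgebra.coe_add, Subalgebra.coe_smul,
    AddSubmonoidClass.coe_finsetSum, coe_meanOpₗ_pow_apply, Finset.sum_apply, Pi.add_apply,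
    Pi.smul_apply, smul_eq_mul] at hx
  rw [hx]
  refine congrArg _ (Finset.sum_congr rfl fun k hk => ?_)
  have hk : k < n := Finset.mem_range.mp hk
  rw [← mul_assoc, ← pow_add, show 2 * k + 1 + (n - k - 1) = n + k by omega]
end
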